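/- Let C be a counital coalgebra and q ∈ k nonzero. The map R(c⊗d) = q⁻¹·ε(c)Δ(d) + q·ε(d)Δ(c) − q⁻¹·c⊗d on C⊗C satisfies the Hecke relation (R + q⁻¹·id)∘(R − q·id) = 0. -/

import Mathlib

open TensorProduct LinearMap

/-- For a counital `k`-coalgebra `C` and nonzero `q ∈ k`, the map
`R(c⊗d) = q⁻¹·ε(c)Δ(d) + q·ε(d)Δ(c) − q⁻¹·c⊗d` on `C ⊗ C` satisfies the Hecke relation
`(R + q⁻¹·id) ∘ (R − q·id) = 0`. -/
theorem stmt15 (k C : Type*) [Field k] [AddCommGroup C] [Module k C] [Coalgebra k C]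
    (q : k) (hq : q ≠ 0)
    (R : C ⊗[k] C →ₗ[k] C ⊗[k] C)
    (hR : ∀ c d : C, R (c ⊗ₜ[k] d) =
      (q⁻¹ * Coalgebra.counit (R := k) c) • Coalgebra.comul (R := k) d
      + (q * Coalgebra.counit (R := k) d) • Coalgebra.comul (R := k) c
      - q⁻¹ • (c ⊗ₜ[k] d)) :
    (R + q⁻¹ • LinearMap.id) ∘ₗ (R - q • LinearMap.id) = 0 := by
  -- R expressed as a linear combination of linear maps
  have hRmap : R = q⁻¹ • ((Coalgebra.comul (R := k) (A := C)) ∘ₗ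
        (TensorProduct.lid k C).toLinearMap ∘ₗ (Coalgebra.counit (R := k)).rTensor C)
      + q • ((Coalgebra.comul (R := k) (A := C)) ∘ₗ
        (TensorProduct.rid k C).toLinearMap ∘ₗ (Coalgebra.counit (R := k)).lTensor C)
      - q⁻¹ • LinearMap.id := by
    ext c d
    simp [hR c d, TensorProduct.smul_tmul', mul_smul]
  -- key: R ∘ comul = q • comul
  have h1 : R ∘ₗ (Coalgebra.comul (R := k) (A := C)) = q • Coalgebra.comul := by
    rw [hRmap]
    ext a
    simp [mul_smul, smul_smul, inv_mul_cancel₀ hq]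
  have hkey : ∀ a : C, R (Coalgebra.comul (R := k) a) = q • Coalgebra.comul a :=
    fun a => LinearMap.congr_fun h1 a
  ext c d
  simp only [comp_apply, AlgebraTensorModule.curry_apply, curry_apply,
    coe_restrictScalars, LinearMap.sub_apply, LinearMap.add_apply, LinearMap.smul_apply, id_apply, LinearMap.zero_apply,
    map_sub, map_add, map_smul, hR, hkey]
  match_scalars <;> (field_simp; try ring)
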